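/- Let H = ⟨a_1, ..., a_n⟩ (n ≥ 3, minimally generated) and suppose some pseudo-Frobenius number α satisfies (n-1)α ∉ H. Then H is almost symmetric. -/

import Mathlib

/-- The numerical semigroup (as a subset of ℤ) generated by `a`. -/
def SgGen {n : ℕ} (a : Fin n → ℕ) : Set ℤ :=
  {x | ∃ c : Fin n → ℕ, x = ∑ i, (c i : ℤ) * a i}

/-- `α` is a pseudo-Frobenius number of `⟨a⟩`. -/
def IsPF {n : ℕ} (a : Fin n → ℕ) (α : ℤ) : Prop :=
  α ∉ SgGen a ∧ ∀ i, α + a i ∈ SgGen a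

/-- `a` minimally generates: no generator is a combination of the others. -/
def MinGen {n : ℕ} (a : Fin n → ℕ) : Prop :=
  ∀ i, ¬ ∃ c : Fin n → ℕ, c i = 0 ∧ (a i : ℤ) = ∑ j, (c j : ℤ) * a j

/-!
Pseudo-Frobenius numbers are positive, and `kα ∈ H` forces `lα ∈ H` for all `l ≥ k`, so none
of `α, 2α, …, (n-1)α` lies in `H`. Write `i → j` when `α + aᵢ - aⱼ ∈ H`. Summing along a
closed walk of length `L` puts `Lα` in `H`, so every cycle has length at least `n`; hence `→` is
the graph of an `n`-cycle `σ`, and `α + aᵢ = rᵢ a_{σ i}`. Summing these relations, a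
pseudo-Frobenius number `f` with `f + α ∈ H` must be `(n-1)α`. Climbing from any
pseudo-Frobenius number `γ` along `γ, γ + α, γ + 2α, …` to the last gap yields such an `f`, so
`PF(H) = {α, 2α, …, (n-1)α}`; then `F = (n-1)α` and `F - kα = (n-1-k)α` is again
pseudo-Frobenius.
-/

open Finset

namespace SgGen

variable {n : ℕ} {a : Fin n → ℕ} {x y α : ℤ}

theorem eq_closure (a : Fin n → ℕ) :
    SgGen a = (AddSubmonoid.closure (Set.range fun i => (a i : ℤ)) : Set ℤ) := by
  ext x
  simp [SgGen, AddSubmonoid.mem_closure_range_iff_of_fintype]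

theorem zero_mem : (0 : ℤ) ∈ SgGen a := by
  rw [eq_closure]; exact AddSubmonoid.zero_mem _

theorem add_mem (hx : x ∈ SgGen a) (hy : y ∈ SgGen a) : x + y ∈ SgGen a := by
  rw [eq_closure] at *; exact AddSubmonoid.add_mem _ hx hy

theorem sum_mem {ι : Type*} {s : Finset ι} {f : ι → ℤ} (h : ∀ i ∈ s, f i ∈ SgGen a) :
    ∑ i ∈ s, f i ∈ SgGen a := by
  rw [eq_closure] at *; exact AddSubmonoid.sum_mem _ h

theorem natCast_mul_mem (m : ℕ) (i : Fin n) : (m : ℤ) * a i ∈ SgGen a :=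
  ⟨Pi.single i m, by simp [Pi.single_apply]⟩

theorem gen_mem (i : Fin n) : (a i : ℤ) ∈ SgGen a := by
  simpa using natCast_mul_mem 1 i

theorem nonneg (hx : x ∈ SgGen a) : 0 ≤ x := by
  obtain ⟨c, rfl⟩ := hx
  positivity

theorem sum_sub_mul_mem (c : Fin n → ℕ) {j : Fin n} {m : ℕ} (h : m ≤ c j) :
    ∑ i, (c i : ℤ) * a i - m * a j ∈ SgGen a := by
  refine ⟨Function.update c j (c j - m), ?_⟩
  have hrest : ∑ i ∈ univ.erase j, ((Function.update c j (c j - m) i : ℕ) : ℤ) * a i =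
      ∑ i ∈ univ.erase j, (c i : ℤ) * a i :=
    sum_congr rfl fun i hi => by rw [Function.update_of_ne (ne_of_mem_erase hi)]
  rw [← add_sum_erase _ _ (mem_univ j), ← add_sum_erase _ _ (mem_univ j), hrest,
    Function.update_self, Nat.cast_sub h]
  ring

theorem exists_sub_gen_mem (hx : x ∈ SgGen a) (hx0 : x ≠ 0) : ∃ i, x - a i ∈ SgGen a := by
  obtain ⟨c, rfl⟩ := hx
  obtain ⟨j, hj⟩ : ∃ j, c j ≠ 0 := by
    by_contra! h
    simp [h] at hx0
  exact ⟨j, by simpa using sum_sub_mul_mem c (m := 1) (Nat.one_le_iff_ne_zero.2 hj)⟩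

theorem mul_add_sub_mem_of_chain (v : ℕ → Fin n) (L : ℕ)
    (hv : ∀ k < L, α + a (v k) - a (v (k + 1)) ∈ SgGen a) :
    L * α + a (v 0) - a (v L) ∈ SgGen a := by
  induction L with
  | zero => simpa using zero_mem
  | succ L ih =>
    convert add_mem (ih fun k hk => hv k (by omega)) (hv L (by omega)) using 1
    push_cast
    ring

theorem exists_forall_ge_mem (hgcd : univ.gcd a = 1) : ∃ N : ℤ, ∀ z ≥ N, z ∈ SgGen a := by
  have hset : Nat.setGcd (Set.range a) = 1 :=
    Nat.dvd_one.mp <| hgcd ▸ Finset.dvd_gcd fun i _ => Nat.setGcd_dvd_of_mem ⟨i, rfl⟩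
  obtain ⟨N, hN⟩ := Nat.exists_mem_closure_of_ge (Set.range a)
  refine ⟨N, fun z hz => ?_⟩
  lift z to ℕ using by omega
  have := AddSubmonoid.mem_map_of_mem (Nat.castAddMonoidHom ℤ)
    (hN z (by omega) (hset ▸ one_dvd z))
  rw [AddMonoidHom.map_mclosure, ← Set.range_comp] at this
  rw [eq_closure]
  exact this

theorem exists_isGreatest_notMem (hgcd : univ.gcd a = 1) (hx : x ∉ SgGen a) :
    ∃ F, IsGreatest {m | m ∉ SgGen a} F := by
  obtain ⟨N, hN⟩ := exists_forall_ge_mem hgcd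
  obtain ⟨F, hF, hFmax⟩ := Int.exists_greatest_of_bdd (P := (· ∉ SgGen a))
    ⟨N, fun z hz => by by_contra! h; exact hz (hN z h.le)⟩ ⟨x, hx⟩
  exact ⟨F, hF, hFmax⟩

end SgGen

theorem MinGen.sub_notMem {n : ℕ} {a : Fin n → ℕ} (hmin : MinGen a) {i j : Fin n}
    (hi : 0 < a i) (hij : i ≠ j) : (a j : ℤ) - a i ∉ SgGen a := by
  rintro ⟨d, hd⟩
  have hdj : d j = 0 := by
    by_contra h
    have := SgGen.nonneg <|
      SgGen.sum_sub_mul_mem d (a := a) (m := 1) (Nat.one_le_iff_ne_zero.2 h)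
    omega
  have hsum :
      ∑ k, (((d + Pi.single i 1 : Fin n → ℕ) k : ℕ) : ℤ) * a k = ∑ k, (d k : ℤ) * a k + a i := by
    simp [add_mul, sum_add_distrib, Pi.single_apply]
  refine hmin j ⟨d + Pi.single i 1, by simp [hdj, hij.symm], ?_⟩
  rw [hsum]
  omega

section Orbit

variable {n : ℕ} {σ : Fin n → Fin n}

theorem iterate_injective_of_forall_ne (h : ∀ j (m : ℕ), 0 < m → m < n → σ^[m] j ≠ j)
    (j : Fin n) : Function.Injective fun t : Fin n => σ^[t] j := by
  suffices ∀ s t : Fin n, (s : ℕ) < t → σ^[s] j ≠ σ^[t] j by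
    intro s t hst
    by_contra hne
    rcases lt_or_gt_of_ne (Fin.val_ne_of_ne hne) with hlt | hlt
    · exact this s t hlt hst
    · exact this t s hlt hst.symm
  intro s t hst heq
  refine h (σ^[s] j) (t - s) (by omega) (by omega) ?_
  rw [← Function.iterate_add_apply, Nat.sub_add_cancel hst.le, heq]

theorem iterate_eq_self_of_forall_ne (h : ∀ j (m : ℕ), 0 < m → m < n → σ^[m] j ≠ j)
    (j : Fin n) : σ^[n] j = j := by
  obtain ⟨t, ht⟩ := (Finite.injective_iff_surjective.mp (iterate_injective_of_forall_ne h j))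
    (σ^[n] j)
  by_contra hne
  have ht0 : (t : ℕ) ≠ 0 := fun h0 => hne (by simpa [h0] using ht.symm)
  refine h (σ^[t] j) (n - t) (by omega) (by omega) ?_
  rw [← Function.iterate_add_apply, Nat.sub_add_cancel t.isLt.le]
  exact ht.symm

end Orbit

namespace IsPF

variable {n : ℕ} {a : Fin n → ℕ} {α γ x : ℤ}

theorem add_mem (hγ : IsPF a γ) (hx : x ∈ SgGen a) (hx0 : x ≠ 0) : γ + x ∈ SgGen a := by
  obtain ⟨i, hi⟩ := SgGen.exists_sub_gen_mem hx hx0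
  simpa using SgGen.add_mem (hγ.2 i) hi

theorem pos (hn : 2 ≤ n) (ha : ∀ i, 0 < a i) (hmin : MinGen a) (hγ : IsPF a γ) : 0 < γ := by
  by_contra! hγ0
  have : Nonempty (Fin n) := ⟨⟨0, by omega⟩⟩
  obtain ⟨i, -, hi⟩ := exists_min_image univ a univ_nonempty
  have hγi : γ + a i = 0 := by
    by_contra h
    obtain ⟨j, hj⟩ := SgGen.exists_sub_gen_mem (hγ.2 i) h
    have := SgGen.nonneg hj
    have := hi j (mem_univ j)
    have : γ ≠ 0 := fun h => hγ.1 (h ▸ SgGen.zero_mem)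
    omega
  obtain ⟨j, hj⟩ := Fintype.exists_ne_of_one_lt_card (by rw [Fintype.card_fin]; omega) i
  have hγj := hγ.2 j
  rw [eq_neg_of_add_eq_zero_left hγi, neg_add_eq_sub] at hγj
  exact hmin.sub_notMem (ha i) hj.symm hγj

theorem mul_add_mem (hα : IsPF a α) (hα0 : 0 < α) (hx : x ∈ SgGen a) (hx0 : 0 < x) (m : ℕ) :
    m * α + x ∈ SgGen a := by
  induction m with
  | zero => simpa
  | succ m ih =>
    have := hα.add_mem ih (by positivity)
    convert this using 1
    push_cast
    ring

theorem natCast_mul_mem_of_le (hα : IsPF a α) (hα0 : 0 < α) {k l : ℕ} (hk : 0 < k)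
    (hkl : k ≤ l) (h : (k : ℤ) * α ∈ SgGen a) : (l : ℤ) * α ∈ SgGen a := by
  convert hα.mul_add_mem hα0 h (by positivity) (l - k) using 1
  push_cast [Nat.cast_sub hkl]
  ring

theorem mul (hα : IsPF a α) (hα0 : 0 < α) {m : ℤ} (hm : 0 < m) (h : m * α ∉ SgGen a) :
    IsPF a (m * α) := by
  refine ⟨h, fun i => ?_⟩
  lift m to ℕ using hm.le
  convert hα.mul_add_mem hα0 (hα.2 i) (by positivity) (m - 1) using 1
  push_cast [Nat.cast_sub (show 1 ≤ m by omega)]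
  ring

theorem exists_isPF_add_mul (hγ : IsPF a γ) (hγ0 : 0 < γ) (hα : IsPF a α) (hα0 : 0 < α)
    (hgcd : univ.gcd a = 1) : ∃ k : ℕ, IsPF a (γ + k * α) ∧ γ + k * α + α ∈ SgGen a := by
  classical
  obtain ⟨N, hN⟩ := SgGen.exists_forall_ge_mem hgcd
  have hex : ∃ k : ℕ, γ + k * α ∈ SgGen a :=
    ⟨N.toNat, hN _ (by nlinarith [Int.self_le_toNat N])⟩
  obtain ⟨k, hk⟩ : ∃ k, Nat.find hex = k + 1 := Nat.exists_eq_succ_of_ne_zero fun h => by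
    simpa [h] using hγ.1 (by simpa [h] using Nat.find_spec hex)
  refine ⟨k, ⟨Nat.find_min hex (by omega), fun i => ?_⟩, ?_⟩
  · convert hα.mul_add_mem hα0 (hγ.2 i) (by positivity) k using 1
    ring
  · convert Nat.find_spec hex using 1
    rw [hk]
    push_cast
    ring

theorem of_isGreatest (ha : ∀ i, 0 < a i) {F : ℤ} (hF : IsGreatest {m | m ∉ SgGen a} F) :
    IsPF a F :=
  ⟨hF.1, fun i => by_contra fun h => by have := hF.2 h; have := ha i; omega⟩

theorem exists_perm_add_sub_mem_iff (hα : IsPF a α) (hα0 : 0 < α)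
    (hshort : ∀ m : ℕ, 0 < m → m < n → (m : ℤ) * α ∉ SgGen a) :
    ∃ σ : Equiv.Perm (Fin n), ∀ i j, α + a i - a j ∈ SgGen a ↔ j = σ i := by
  choose σ hσ using fun i => SgGen.exists_sub_gen_mem (hα.2 i) (by positivity)
  have hpath (j : Fin n) (m : ℕ) : m * α + a j - a (σ^[m] j) ∈ SgGen a :=
    SgGen.mul_add_sub_mem_of_chain (fun k => σ^[k] j) m fun k _ => by
      rw [Function.iterate_succ_apply']
      exact hσ _
  have hcycle (j : Fin n) (m : ℕ) (hm0 : 0 < m) (hmn : m < n) : σ^[m] j ≠ j := fun heq =>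
    hshort m hm0 hmn (by simpa [heq] using hpath j m)
  have hsurj : Function.Surjective σ := fun j =>
    ⟨σ^[n - 1] j, by
      rw [← Function.iterate_succ_apply' σ, Nat.succ_eq_add_one, Nat.sub_add_cancel j.pos,
        iterate_eq_self_of_forall_ne hcycle]⟩
  refine ⟨Equiv.ofBijective σ ⟨Finite.injective_iff_surjective.mpr hsurj, hsurj⟩,
    fun i j => ⟨fun hij => ?_, fun h => h ▸ hσ i⟩⟩
  by_contra hne
  obtain ⟨t, rfl⟩ :=
    (Finite.injective_iff_surjective.mp (iterate_injective_of_forall_ne hcycle j)) i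
  -- otherwise `j → σ j → ⋯ → σ^[t] j → j` would be a closed walk of length `t + 1 < n`
  have ht : (t : ℕ) + 1 < n := by
    by_contra! h
    apply hne
    have : (t : ℕ) + 1 = n := by omega
    show j = σ (σ^[t] j)
    rw [← Function.iterate_succ_apply' σ, Nat.succ_eq_add_one, this,
      iterate_eq_self_of_forall_ne hcycle]
  refine hshort (t + 1) (by omega) ht ?_
  convert SgGen.add_mem (hpath j t) hij using 1
  push_cast
  ring

end IsPF

section PseudoFrobenius

variable {n : ℕ} {a : Fin n → ℕ} {α : ℤ}

theorem eq_of_isPF_of_add_mem (σ : Equiv.Perm (Fin n))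
    (hσ : ∀ i j, α + a i - a j ∈ SgGen a ↔ j = σ i) (hα : IsPF a α)
    (hout : ((n : ℤ) - 1) * α ∉ SgGen a) {f : ℤ} (hf : IsPF a f) (hfα : f + α ∈ SgGen a) :
    f = ((n : ℤ) - 1) * α := by
  have hrow (i : Fin n) : ∃ r : ℕ, α + a i = r * a (σ i) := by
    obtain ⟨c, hc⟩ := hα.2 i
    refine ⟨c (σ i), hc.trans (Fintype.sum_eq_single (σ i) fun j hj => ?_)⟩
    suffices c j = 0 by simp [this]
    by_contra h
    refine hj ((hσ i j).1 ?_)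
    simpa [hc] using SgGen.sum_sub_mul_mem c (a := a) (m := 1) (Nat.one_le_iff_ne_zero.2 h)
  choose r hr using hrow
  obtain ⟨c, hc⟩ := hfα
  -- otherwise `f = (f + α) - rᵢ a_{σ i} + aᵢ` would lie in `H`
  have hlt (i : Fin n) : c (σ i) < r i := by
    by_contra! h
    apply hf.1
    convert SgGen.add_mem (SgGen.sum_sub_mul_mem c h) (SgGen.gen_mem i) using 1
    linarith [hr i]
  have hsub : ((n : ℤ) - 1) * α - f ∈ SgGen a := by
    have hsum : ((n : ℤ) - 1) * α - f = ∑ i, ((r i - c (σ i) - 1 : ℕ) : ℤ) * a (σ i) := by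
      calc ((n : ℤ) - 1) * α - f
          = ∑ i, (α + a i - a (σ i)) - ∑ i, (c (σ i) : ℤ) * a (σ i) := by
            rw [sum_sub_distrib, sum_add_distrib, Equiv.sum_comp σ (fun i => (a i : ℤ)),
              Equiv.sum_comp σ (fun j => (c j : ℤ) * a j), ← hc]
            simp only [sum_const, card_univ, Fintype.card_fin, Int.nsmul_eq_mul,
              add_sub_cancel_right]
            ring
        _ = ∑ i, ((r i - c (σ i) - 1 : ℕ) : ℤ) * a (σ i) := by
            rw [← sum_sub_distrib]
            refine sum_congr rfl fun i _ => ?_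
            rw [hr i, Nat.sub_sub, Nat.cast_sub (hlt i)]
            push_cast
            ring
    rw [hsum]
    exact SgGen.sum_mem fun i _ => SgGen.natCast_mul_mem _ _
  by_contra hne
  exact hout (by simpa using hf.add_mem hsub (sub_ne_zero.2 (Ne.symm hne)))

theorem isPF_iff_eq_mul (hn : 2 ≤ n) (ha : ∀ i, 0 < a i) (hgcd : univ.gcd a = 1)
    (hmin : MinGen a) (hα : IsPF a α) (hout : ((n : ℤ) - 1) * α ∉ SgGen a) (γ : ℤ) :
    IsPF a γ ↔ ∃ m : ℤ, 0 < m ∧ m < n ∧ γ = m * α := by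
  have hα0 := hα.pos hn ha hmin
  have hshort (m : ℕ) (hm0 : 0 < m) (hmn : m < n) : (m : ℤ) * α ∉ SgGen a := fun h =>
    hout (by simpa [Nat.cast_sub (show 1 ≤ n by omega)] using
      hα.natCast_mul_mem_of_le hα0 hm0 (Nat.le_sub_one_of_lt hmn) h)
  obtain ⟨σ, hσ⟩ := hα.exists_perm_add_sub_mem_iff hα0 hshort
  constructor
  · intro hγ
    have hγ0 := hγ.pos hn ha hmin
    obtain ⟨k, hk, hkα⟩ := hγ.exists_isPF_add_mul hγ0 hα hα0 hgcd
    have hγk : γ = ((n : ℤ) - 1 - k) * α := by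
      linear_combination eq_of_isPF_of_add_mem σ hσ hα hout hk hkα
    refine ⟨n - 1 - k, ?_, by omega, hγk⟩
    exact pos_of_mul_pos_left (hγk ▸ hγ0) hα0.le
  · rintro ⟨m, hm0, hmn, rfl⟩
    refine hα.mul hα0 hm0 fun h => ?_
    lift m to ℕ using hm0.le
    exact hshort m (by omega) (by omega) h

theorem isPF_frobenius_sub_of_isPF_iff_eq_mul (hn : 2 ≤ n) (ha : ∀ i, 0 < a i)
    (hgcd : univ.gcd a = 1) (hα0 : 0 < α)
    (hPF : ∀ γ, IsPF a γ ↔ ∃ m : ℤ, 0 < m ∧ m < n ∧ γ = m * α) :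
    ∃ F : ℤ, IsGreatest {m : ℤ | m ∉ SgGen a} F ∧
      ∀ γ : ℤ, IsPF a γ → γ ≠ F → IsPF a (F - γ) := by
  have htop : IsPF a (((n : ℤ) - 1) * α) := (hPF _).2 ⟨n - 1, by omega, by omega, rfl⟩
  obtain ⟨F, hF⟩ := SgGen.exists_isGreatest_notMem hgcd htop.1
  obtain ⟨k, -, hkn, hFk⟩ := (hPF F).1 (IsPF.of_isGreatest ha hF)
  have hFtop : F = ((n : ℤ) - 1) * α := by
    have := hF.2 htop.1
    rw [hFk] at this ⊢
    nlinarith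
  refine ⟨F, hF, fun γ hγ hγF => (hPF _).2 ?_⟩
  obtain ⟨m, hm0, hmn, rfl⟩ := (hPF γ).1 hγ
  have hm : m ≠ n - 1 := by
    rintro rfl
    exact hγF hFtop.symm
  exact ⟨n - 1 - m, by omega, by omega, by rw [hFtop]; ring⟩

end PseudoFrobenius

theorem stmt16 {n : ℕ} (hn : 3 ≤ n) (a : Fin n → ℕ) (ha : ∀ i, 0 < a i)
    (hgcd : Finset.univ.gcd a = 1) (hmin : MinGen a)
    (α : ℤ) (hα : IsPF a α) (hout : ((n : ℤ) - 1) * α ∉ SgGen a) :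
    ∃ F : ℤ, IsGreatest {m : ℤ | m ∉ SgGen a} F ∧
      ∀ γ : ℤ, IsPF a γ → γ ≠ F → IsPF a (F - γ) :=
  isPF_frobenius_sub_of_isPF_iff_eq_mul (by omega) ha hgcd (hα.pos (by omega) ha hmin)
    (isPF_iff_eq_mul (by omega) ha hgcd hmin hα hout)
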